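/- arXiv:1305.2156 — 3 statements merged into one kernel-verified Lean document; each statement's English description precedes it below -/
import Mathlib

section
/- Let G be a simple loony endgame. If v(G) ≥ 5 then cv(G) = v(G). Furthermore, if v(G) = 4 and G contains a chain of length 3, then cv(G) = v(G). -/
/-- A component of a dots-and-boxes endgame: a chain or a loop, with an integer length. -/
inductive Comp : Type
  | chain (c : ℤ) : Comp
  | loop (l : ℤ) : Comp
  deriving DecidableEq

/-- The length (number of boxes) of a component. -/
def Comp.len : Comp → ℤ
  | .chain c => c
  | .loop l => l

/-- A simple loony endgame: a multiset of chains of length ≥ 3 and loops of even length ≥ 4. -/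
def IsSimpleLoony (G : Multiset Comp) : Prop :=
  ∀ p ∈ G, match p with
    | .chain c => 3 ≤ c
    | .loop l => 4 ≤ l ∧ Even l

/-- Fuel-indexed value function. -/
noncomputable def vAux : ℕ → Multiset Comp → ℤ
  | 0, _ => 0
  | n + 1, G =>
    if G = 0 then 0
    else sInf { x : ℤ | ∃ p ∈ G,
      x = match p with
        | Comp.chain c => c - 2 + |vAux n (G.erase p) - 2|
        | Comp.loop l => l - 4 + |vAux n (G.erase p) - 4| }

/-- The value of a simple loony endgame: 0 on the empty game; on a nonempty game, the
minimum over components of `c - 2 + |v(G∖{c}) - 2|` for a chain of length `c` and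
`ℓ - 4 + |v(G∖{ℓ}) - 4|` for a loop of length `ℓ`. -/
noncomputable def v (G : Multiset Comp) : ℤ := vAux (Multiset.card G) G

/-- The fully controlled value: Σ_chains (c - 4) + Σ_loops (ℓ - 8). -/
def fcv (G : Multiset Comp) : ℤ :=
  (G.map (fun p => match p with
    | Comp.chain c => c - 4
    | Comp.loop l => l - 8)).sum

/-- The terminal bonus. -/
noncomputable def tb (G : Multiset Comp) : ℤ :=
  open Classical in
  if G = 0 then 0
  else if (∃ c, 4 ≤ c ∧ Comp.chain c ∈ G) ∨ (∀ l, Comp.loop l ∉ G) then 4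
  else if ∀ c, Comp.chain c ∉ G then 8
  else 6

/-- The controlled value. -/
noncomputable def cv (G : Multiset Comp) : ℤ := fcv G + tb G

-- ===== auxiliary development =====

def fstep (p : Comp) (x : ℤ) : ℤ :=
  match p with
  | .chain c => c - 2 + |x - 2|
  | .loop l => l - 4 + |x - 4|

lemma vAux_zero (n : ℕ) : vAux n 0 = 0 := by cases n <;> simp [vAux]

lemma vAux_succ (n : ℕ) (G : Multiset Comp) (h : G ≠ 0) :
    vAux (n + 1) G = sInf { x : ℤ | ∃ p ∈ G, x = fstep p (vAux n (G.erase p)) } := by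
  rw [vAux, if_neg h]
  congr 1

lemma vAux_congr : ∀ (n m : ℕ) (G : Multiset Comp), Multiset.card G ≤ n →
    Multiset.card G ≤ m → vAux n G = vAux m G := by
  intro n
  induction n with
  | zero =>
    intro m G h _
    have : G = 0 := by
      rw [← Multiset.card_eq_zero]; omega
    subst this; rw [vAux_zero, vAux_zero]
  | succ n ih =>
    intro m G hn hm
    by_cases hG : G = 0
    · subst hG; rw [vAux_zero, vAux_zero]
    · have hcard : 0 < Multiset.card G := Multiset.card_pos.mpr hG
      obtain ⟨m', rfl⟩ : ∃ m', m = m' + 1 := ⟨m - 1, by omega⟩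
      rw [vAux_succ n G hG, vAux_succ m' G hG]
      congr 1
      ext x
      have hpt : ∀ p ∈ G, vAux n (G.erase p) = vAux m' (G.erase p) := by
        intro p hp
        have hce : Multiset.card (G.erase p) = Multiset.card G - 1 :=
          Multiset.card_erase_of_mem hp
        exact ih m' (G.erase p) (by omega) (by omega)
      constructor
      · rintro ⟨p, hp, rfl⟩; exact ⟨p, hp, by rw [hpt p hp]⟩
      · rintro ⟨p, hp, rfl⟩; exact ⟨p, hp, by rw [hpt p hp]⟩

lemma v_zero : v 0 = 0 := rfl

lemma v_eq (G : Multiset Comp) (h : G ≠ 0) :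
    v G = sInf { x : ℤ | ∃ p ∈ G, x = fstep p (v (G.erase p)) } := by
  have hcard : 0 < Multiset.card G := Multiset.card_pos.mpr h
  obtain ⟨n, hn⟩ : ∃ n, Multiset.card G = n + 1 := ⟨Multiset.card G - 1, by omega⟩
  rw [v, hn, vAux_succ n G h]
  congr 1
  ext x
  have hpt : ∀ p ∈ G, vAux n (G.erase p) = v (G.erase p) := by
    intro p hp
    have hce : Multiset.card (G.erase p) = Multiset.card G - 1 :=
      Multiset.card_erase_of_mem hp
    exact vAux_congr n (Multiset.card (G.erase p)) (G.erase p) (by omega) (by omega)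
  constructor
  · rintro ⟨p, hp, rfl⟩; exact ⟨p, hp, by rw [hpt p hp]⟩
  · rintro ⟨p, hp, rfl⟩; exact ⟨p, hp, by rw [hpt p hp]⟩

lemma sset_finite (G : Multiset Comp) :
    { x : ℤ | ∃ p ∈ G, x = fstep p (v (G.erase p)) }.Finite := by
  have : { x : ℤ | ∃ p ∈ G, x = fstep p (v (G.erase p)) } =
      (fun p => fstep p (v (G.erase p))) '' { p | p ∈ G } := by
    ext x
    simp [Set.mem_image, eq_comm]
  rw [this]
  exact (G.finite_toSet).image _

lemma v_le_fstep {G : Multiset Comp} {p : Comp} (hp : p ∈ G) :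
    v G ≤ fstep p (v (G.erase p)) := by
  have hG : G ≠ 0 := by rintro rfl; simp at hp
  rw [v_eq G hG]
  exact csInf_le (sset_finite G).bddBelow ⟨p, hp, rfl⟩

lemma le_v {G : Multiset Comp} {b : ℤ} (hG : G ≠ 0)
    (H : ∀ p ∈ G, b ≤ fstep p (v (G.erase p))) : b ≤ v G := by
  rw [v_eq G hG]
  apply le_csInf
  · rcases Multiset.exists_mem_of_ne_zero hG with ⟨p, hp⟩
    exact ⟨_, p, hp, rfl⟩
  · rintro x ⟨p, hp, rfl⟩; exact H p hp

lemma loony_chain {G : Multiset Comp} (hG : IsSimpleLoony G) {c : ℤ}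
    (h : Comp.chain c ∈ G) : 3 ≤ c := hG _ h

lemma loony_loop {G : Multiset Comp} (hG : IsSimpleLoony G) {l : ℤ}
    (h : Comp.loop l ∈ G) : 4 ≤ l ∧ Even l := hG _ h

lemma loony_erase {G : Multiset Comp} (hG : IsSimpleLoony G) (q : Comp) :
    IsSimpleLoony (G.erase q) := fun p hp => hG p (Multiset.mem_of_mem_erase hp)

lemma v_nonneg {G : Multiset Comp} (hG : IsSimpleLoony G) : 0 ≤ v G := by
  by_cases h : G = 0
  · subst h; rw [v_zero]
  · apply le_v h
    intro p hp
    cases p with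
    | chain c =>
      have hc := loony_chain hG hp
      have := abs_nonneg (v (G.erase (Comp.chain c)) - 2)
      show (0:ℤ) ≤ c - 2 + |v (G.erase (Comp.chain c)) - 2|
      omega
    | loop l =>
      have hl := (loony_loop hG hp).1
      have := abs_nonneg (v (G.erase (Comp.loop l)) - 4)
      show (0:ℤ) ≤ l - 4 + |v (G.erase (Comp.loop l)) - 4|
      omega

lemma two_le_v {G : Multiset Comp} (hne : G ≠ 0)
    (hc : ∀ c : ℤ, Comp.chain c ∈ G → 4 ≤ c)
    (hl : ∀ l : ℤ, Comp.loop l ∈ G → 6 ≤ l) : 2 ≤ v G := by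
  apply le_v hne
  intro p hp
  cases p with
  | chain c =>
    have := hc c hp
    have := abs_nonneg (v (G.erase (Comp.chain c)) - 2)
    show (2:ℤ) ≤ c - 2 + |v (G.erase (Comp.chain c)) - 2|
    omega
  | loop l =>
    have := hl l hp
    have := abs_nonneg (v (G.erase (Comp.loop l)) - 4)
    show (2:ℤ) ≤ l - 4 + |v (G.erase (Comp.loop l)) - 4|
    omega

lemma fstep_chain (c x : ℤ) : fstep (Comp.chain c) x = c - 2 + |x - 2| := rfl

lemma fstep_loop (l x : ℤ) : fstep (Comp.loop l) x = l - 4 + |x - 4| := rfl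

lemma v_singleton_chain (c : ℤ) : v {Comp.chain c} = c := by
  rw [v_eq _ (by simp)]
  have hval : fstep (Comp.chain c) (v (({Comp.chain c} : Multiset Comp).erase (Comp.chain c))) = c := by
    rw [Multiset.erase_singleton, v_zero, fstep_chain]
    norm_num
  have hset : { x : ℤ | ∃ p ∈ ({Comp.chain c} : Multiset Comp),
      x = fstep p (v (({Comp.chain c} : Multiset Comp).erase p)) } = {c} := by
    ext x
    simp only [Set.mem_setOf_eq, Multiset.mem_singleton, Set.mem_singleton_iff]
    constructor
    · rintro ⟨p, rfl, rfl⟩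
      exact hval
    · intro hx
      exact ⟨Comp.chain c, rfl, by rw [hx, hval]⟩
  rw [hset, csInf_singleton]

lemma v_singleton_loop (l : ℤ) : v {Comp.loop l} = l := by
  rw [v_eq _ (by simp)]
  have hval : fstep (Comp.loop l) (v (({Comp.loop l} : Multiset Comp).erase (Comp.loop l))) = l := by
    rw [Multiset.erase_singleton, v_zero, fstep_loop]
    norm_num
  have hset : { x : ℤ | ∃ p ∈ ({Comp.loop l} : Multiset Comp),
      x = fstep p (v (({Comp.loop l} : Multiset Comp).erase p)) } = {l} := by
    ext x
    simp only [Set.mem_setOf_eq, Multiset.mem_singleton, Set.mem_singleton_iff]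
    constructor
    · rintro ⟨p, rfl, rfl⟩
      exact hval
    · intro hx
      exact ⟨Comp.loop l, rfl, by rw [hx, hval]⟩
  rw [hset, csInf_singleton]

-- ===== fcv lemmas =====

def fg (p : Comp) : ℤ :=
  match p with
  | .chain c => c - 4
  | .loop l => l - 8

lemma fcv_eq (G : Multiset Comp) : fcv G = (G.map fg).sum := by
  unfold fcv
  congr 1

lemma fcv_zero : fcv 0 = 0 := by simp [fcv]

lemma fcv_cons (p : Comp) (G : Multiset Comp) : fcv (p ::ₘ G) = fg p + fcv G := by
  rw [fcv_eq, fcv_eq, Multiset.map_cons, Multiset.sum_cons]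

lemma fcv_erase {G : Multiset Comp} {p : Comp} (hp : p ∈ G) :
    fcv G = fg p + fcv (G.erase p) := by
  conv_lhs => rw [← Multiset.cons_erase hp]
  rw [fcv_cons]

lemma fcv_nonneg {G : Multiset Comp} (h : ∀ p ∈ G, 0 ≤ fg p) : 0 ≤ fcv G := by
  rw [fcv_eq]
  apply Multiset.sum_nonneg
  intro x hx
  rcases Multiset.mem_map.mp hx with ⟨p, hp, rfl⟩
  exact h p hp

lemma fg_le_fcv {G : Multiset Comp} {p : Comp} (hp : p ∈ G)
    (h : ∀ q ∈ G, 0 ≤ fg q) : fg p ≤ fcv G := by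
  rw [fcv_erase hp]
  have : 0 ≤ fcv (G.erase p) :=
    fcv_nonneg (fun q hq => h q (Multiset.mem_of_mem_erase hq))
  omega

lemma fcv_all_c3 {G : Multiset Comp} (h : ∀ p ∈ G, p = Comp.chain 3) :
    fcv G = -(Multiset.card G) := by
  induction G using Multiset.induction_on with
  | empty => simp [fcv_zero]
  | cons p G ih =>
    have hp : p = Comp.chain 3 := h p (Multiset.mem_cons_self p G)
    rw [fcv_cons, ih (fun q hq => h q (Multiset.mem_cons_of_mem hq)), hp]
    simp [fg]

-- ===== tb lemmas =====

lemma tb_zero : tb 0 = 0 := by simp [tb]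

lemma tb_eq_four {G : Multiset Comp} (h : G ≠ 0)
    (h4 : (∃ c, 4 ≤ c ∧ Comp.chain c ∈ G) ∨ (∀ l, Comp.loop l ∉ G)) : tb G = 4 := by
  unfold tb
  rw [if_neg h, if_pos h4]

lemma tb_eq_eight {G : Multiset Comp} (h : G ≠ 0)
    (h4 : ¬ ((∃ c, 4 ≤ c ∧ Comp.chain c ∈ G) ∨ (∀ l, Comp.loop l ∉ G)))
    (hnc : ∀ c, Comp.chain c ∉ G) : tb G = 8 := by
  unfold tb
  rw [if_neg h, if_neg h4, if_pos hnc]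

lemma tb_eq_six {G : Multiset Comp} (h : G ≠ 0)
    (h4 : ¬ ((∃ c, 4 ≤ c ∧ Comp.chain c ∈ G) ∨ (∀ l, Comp.loop l ∉ G)))
    (hc : ¬ ∀ c, Comp.chain c ∉ G) : tb G = 6 := by
  unfold tb
  rw [if_neg h, if_neg h4, if_neg hc]

lemma tb_le_eight (G : Multiset Comp) : tb G ≤ 8 := by
  unfold tb
  split_ifs <;> norm_num

lemma four_le_tb {G : Multiset Comp} (h : G ≠ 0) : 4 ≤ tb G := by
  unfold tb
  rw [if_neg h]
  split_ifs <;> norm_num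

lemma tb_ge_six {G : Multiset Comp} (h : G ≠ 0)
    (h4 : ¬ ((∃ c, 4 ≤ c ∧ Comp.chain c ∈ G) ∨ (∀ l, Comp.loop l ∉ G))) : 6 ≤ tb G := by
  unfold tb
  rw [if_neg h, if_neg h4]
  split_ifs <;> norm_num

-- ===== helper =====

lemma eq_singleton_of_erase_eq_zero {G : Multiset Comp} {p : Comp} (hp : p ∈ G)
    (h : G.erase p = 0) : G = {p} := by
  rw [← Multiset.cons_erase hp, h]
  rfl

lemma cv_def (G : Multiset Comp) : cv G = fcv G + tb G := rfl

lemma fcv_singleton (p : Comp) : fcv {p} = fg p := by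
  rw [show ({p} : Multiset Comp) = p ::ₘ 0 from rfl, fcv_cons, fcv_zero, add_zero]

-- ===== main induction =====

theorem key : ∀ G : Multiset Comp, IsSimpleLoony G →
    cv G ≤ v G ∧ v G ≤ max (cv G) 4 ∧ (Comp.chain 3 ∈ G → v G ≤ max (cv G) 3) := by
  intro G
  induction G using Multiset.strongInductionOn with
  | _ G IH =>
  intro hG
  by_cases hne : G = 0
  · subst hne
    rw [v_zero, cv_def, fcv_zero, tb_zero]
    refine ⟨le_rfl, by norm_num, fun h => by simp at h⟩
  have part1 : cv G ≤ v G := by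
    apply le_v hne
    intro p hp
    have hGp := loony_erase hG p
    have hfcv := fcv_erase hp
    have hcvG := cv_def G
    have hcvG' := cv_def (G.erase p)
    cases p with
    | chain c =>
      have hc := loony_chain hG hp
      rw [fstep_chain]
      have hfg : fg (Comp.chain c) = c - 4 := rfl
      have habs := abs_cases (v (G.erase (Comp.chain c)) - 2)
      by_cases hG0 : G.erase (Comp.chain c) = 0
      · have hGs : G = {Comp.chain c} := eq_singleton_of_erase_eq_zero hp hG0
        rw [hG0, v_zero]
        have htb : tb G = 4 := by
          apply tb_eq_four hne
          refine Or.inr (fun m hm => ?_)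
          rw [hGs] at hm
          simp at hm
        have habs2 : |(0:ℤ) - 2| = 2 := by norm_num
        rw [habs2, hcvG, htb, hGs, fcv_singleton, hfg]
        omega
      · have hIH := IH _ (Multiset.erase_lt.mpr hp) hGp
        have h1' := hIH.1
        have htb : tb G ≤ tb (G.erase (Comp.chain c)) := by
          by_cases h4 : (∃ d, 4 ≤ d ∧ Comp.chain d ∈ G) ∨ (∀ m, Comp.loop m ∉ G)
          · rw [tb_eq_four hne h4]
            exact four_le_tb hG0
          · have h4' : ¬ ((∃ d, 4 ≤ d ∧ Comp.chain d ∈ G.erase (Comp.chain c)) ∨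
                (∀ m, Comp.loop m ∉ G.erase (Comp.chain c))) := by
              push_neg at h4 ⊢
              obtain ⟨hnb, m, hm⟩ := h4
              exact ⟨fun d hd4 hdm => hnb d hd4 (Multiset.mem_of_mem_erase hdm), m,
                (Multiset.mem_erase_of_ne (by simp)).mpr hm⟩
            rw [tb_eq_six hne h4 (fun h => h c hp)]
            exact tb_ge_six hG0 h4'
        rcases habs with ⟨he, _⟩ | ⟨he, _⟩ <;> omega
    | loop l =>
      have hl4 := (loony_loop hG hp).1
      rw [fstep_loop]
      have hfg : fg (Comp.loop l) = l - 8 := rfl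
      have habs := abs_cases (v (G.erase (Comp.loop l)) - 4)
      by_cases hG0 : G.erase (Comp.loop l) = 0
      · have hGs : G = {Comp.loop l} := eq_singleton_of_erase_eq_zero hp hG0
        rw [hG0, v_zero]
        have htb : tb G = 8 := by
          apply tb_eq_eight hne
          · rintro (⟨d, hd4, hdm⟩ | hnl)
            · rw [hGs] at hdm; simp at hdm
            · exact hnl l hp
          · intro d hdm
            rw [hGs] at hdm; simp at hdm
        have habs2 : |(0:ℤ) - 4| = 4 := by norm_num
        rw [habs2, hcvG, htb, hGs, fcv_singleton, hfg]
        omega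
      · have hIH := IH _ (Multiset.erase_lt.mpr hp) hGp
        have h1' := hIH.1
        have h2' := hIH.2.1
        by_cases h4 : (∃ d, 4 ≤ d ∧ Comp.chain d ∈ G) ∨ (∀ m, Comp.loop m ∉ G)
        · have htbG : tb G = 4 := tb_eq_four hne h4
          obtain ⟨d, hd4, hdm⟩ : ∃ d, 4 ≤ d ∧ Comp.chain d ∈ G := by
            rcases h4 with h | h
            · exact h
            · exact absurd hp (h l)
          have hdm' : Comp.chain d ∈ G.erase (Comp.loop l) :=
            (Multiset.mem_erase_of_ne (by simp)).mpr hdm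
          have htb' : tb (G.erase (Comp.loop l)) = 4 := tb_eq_four hG0 (Or.inl ⟨d, hd4, hdm'⟩)
          rcases habs with ⟨he, _⟩ | ⟨he, _⟩ <;> omega
        · by_cases hnc : ∀ d, Comp.chain d ∉ G
          · have htbG : tb G = 8 := tb_eq_eight hne h4 hnc
            have hnc' : ∀ d, Comp.chain d ∉ G.erase (Comp.loop l) :=
              fun d hdm => hnc d (Multiset.mem_of_mem_erase hdm)
            obtain ⟨q, hq⟩ := Multiset.exists_mem_of_ne_zero hG0
            have htb' : tb (G.erase (Comp.loop l)) = 8 := by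
              apply tb_eq_eight hG0 _ hnc'
              rintro (⟨d, hd4, hdm⟩ | hnl)
              · exact hnc' d hdm
              · cases q with
                | chain e => exact hnc' e hq
                | loop m => exact hnl m hq
            rcases habs with ⟨he, _⟩ | ⟨he, _⟩ <;> omega
          · have htbG : tb G = 6 := tb_eq_six hne h4 hnc
            push_neg at hnc
            obtain ⟨d, hdm⟩ := hnc
            have hdm' : Comp.chain d ∈ G.erase (Comp.loop l) :=
              (Multiset.mem_erase_of_ne (by simp)).mpr hdm
            by_cases hLp : ∃ m, Comp.loop m ∈ G.erase (Comp.loop l)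
            · obtain ⟨m, hm⟩ := hLp
              have htb' : tb (G.erase (Comp.loop l)) = 6 := by
                apply tb_eq_six hG0
                · rintro (⟨e, he4, hem⟩ | hnl)
                  · exact h4 (Or.inl ⟨e, he4, Multiset.mem_of_mem_erase hem⟩)
                  · exact hnl m hm
                · exact fun h => h d hdm'
              rcases habs with ⟨he, _⟩ | ⟨he, _⟩ <;> omega
            · have hall3 : ∀ q ∈ G.erase (Comp.loop l), q = Comp.chain 3 := by
                intro q hq
                cases q with
                | chain e =>
                  have h3 := loony_chain hG (Multiset.mem_of_mem_erase hq)
                  have hne4 : ¬ 4 ≤ e :=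
                    fun h4e => h4 (Or.inl ⟨e, h4e, Multiset.mem_of_mem_erase hq⟩)
                  have : e = 3 := by omega
                  rw [this]
                | loop m => exact absurd ⟨m, hq⟩ hLp
              have hfcv' : fcv (G.erase (Comp.loop l)) =
                  -(Multiset.card (G.erase (Comp.loop l))) := fcv_all_c3 hall3
              have hk : 0 < Multiset.card (G.erase (Comp.loop l)) := Multiset.card_pos.mpr hG0
              by_cases hk1 : Multiset.card (G.erase (Comp.loop l)) = 1
              · obtain ⟨a, ha⟩ := Multiset.card_eq_one.mp hk1
                have ha3 : a = Comp.chain 3 := hall3 a (ha ▸ Multiset.mem_singleton_self a)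
                have hv' : v (G.erase (Comp.loop l)) = 3 := by
                  rw [ha, ha3, v_singleton_chain]
                have habs1 : |v (G.erase (Comp.loop l)) - 4| = 1 := by rw [hv']; norm_num
                rw [habs1]
                have hcard1 : fcv (G.erase (Comp.loop l)) = -1 := by rw [hfcv', hk1]; norm_num
                omega
              · have htb' : tb (G.erase (Comp.loop l)) = 4 :=
                  tb_eq_four hG0 (Or.inr (fun m hm => hLp ⟨m, hm⟩))
                have hv'le : v (G.erase (Comp.loop l)) ≤ 4 := by
                  refine le_trans h2' (max_le ?_ le_rfl)
                  omega
                rcases habs with ⟨he, _⟩ | ⟨he, _⟩ <;> omega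
  have part23 : v G ≤ max (cv G) 4 ∧ (Comp.chain 3 ∈ G → v G ≤ max (cv G) 3) := by
    by_cases h3 : Comp.chain 3 ∈ G
    · have hmain : v G ≤ max (cv G) 3 := by
        by_cases hG0 : G.erase (Comp.chain 3) = 0
        · have hGs : G = {Comp.chain 3} := eq_singleton_of_erase_eq_zero h3 hG0
          rw [hGs, v_singleton_chain]
          exact le_max_right _ 3
        · have hIH := IH _ (Multiset.erase_lt.mpr h3) (loony_erase hG _)
          have hv'0 : 0 ≤ v (G.erase (Comp.chain 3)) := v_nonneg (loony_erase hG _)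
          have hfcv := fcv_erase h3
          have hfg : fg (Comp.chain 3) = 3 - 4 := rfl
          have hcvG := cv_def G
          have hcvG' := cv_def (G.erase (Comp.chain 3))
          by_cases hcv' : cv (G.erase (Comp.chain 3)) ≤ 4
          · have hv'4 : v (G.erase (Comp.chain 3)) ≤ 4 :=
              le_trans hIH.2.1 (max_le hcv' le_rfl)
            have hle := v_le_fstep h3
            rw [fstep_chain] at hle
            have habs := abs_cases (v (G.erase (Comp.chain 3)) - 2)
            have hv3 : v G ≤ 3 := by
              rcases habs with ⟨he, _⟩ | ⟨he, _⟩ <;> omega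
            exact le_trans hv3 (le_max_right _ 3)
          · push_neg at hcv'
            have hveq : v (G.erase (Comp.chain 3)) = cv (G.erase (Comp.chain 3)) :=
              le_antisymm (le_trans hIH.2.1 (max_le le_rfl (by omega))) hIH.1
            by_cases hnc' : ∀ d, Comp.chain d ∉ G.erase (Comp.chain 3)
            · -- G minus the 3-chain is loops only
              have hloops : ∀ q ∈ G.erase (Comp.chain 3),
                  ∃ m, q = Comp.loop m ∧ 4 ≤ m ∧ Even m := by
                intro q hq
                cases q with
                | chain e => exact absurd hq (hnc' e)
                | loop m => exact ⟨m, rfl, loony_loop hG (Multiset.mem_of_mem_erase hq)⟩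
              have hnb : ∀ e, 4 ≤ e → Comp.chain e ∉ G := by
                intro e he4 hem
                have hne3 : Comp.chain e ≠ Comp.chain 3 := by
                  intro hh; rw [Comp.chain.injEq] at hh; omega
                exact hnc' e ((Multiset.mem_erase_of_ne hne3).mpr hem)
              obtain ⟨q0, hq0⟩ := Multiset.exists_mem_of_ne_zero hG0
              obtain ⟨m0, rfl, hm04, hm0e⟩ := hloops q0 hq0
              have h4G : ¬ ((∃ d, 4 ≤ d ∧ Comp.chain d ∈ G) ∨ (∀ m, Comp.loop m ∉ G)) := by
                rintro (⟨d, hd4, hdm⟩ | hnl)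
                · exact hnb d hd4 hdm
                · exact hnl m0 (Multiset.mem_of_mem_erase hq0)
              have htbG : tb G = 6 := tb_eq_six hne h4G (fun h => h 3 h3)
              have htb' : tb (G.erase (Comp.chain 3)) = 8 := by
                apply tb_eq_eight hG0 _ hnc'
                rintro (⟨d, hd4, hdm⟩ | hnl)
                · exact hnc' d hdm
                · exact hnl m0 hq0
              obtain ⟨L, hLmem, hLle⟩ : ∃ L, Comp.loop L ∈ G.erase (Comp.chain 3) ∧
                  L ≤ cv G + 4 := by
                by_cases h46 : ∃ m, m ≤ 6 ∧ Comp.loop m ∈ G.erase (Comp.chain 3)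
                · obtain ⟨m, hm6, hmm⟩ := h46
                  exact ⟨m, hmm, by omega⟩
                · push_neg at h46
                  have hge8 : ∀ q ∈ G.erase (Comp.chain 3), 0 ≤ fg q := by
                    intro q hq
                    obtain ⟨m, rfl, hm4, hme⟩ := hloops q hq
                    have hm7 : ¬ m ≤ 6 := fun hm6 => h46 m hm6 hq
                    obtain ⟨r, hr⟩ := hme
                    show 0 ≤ m - 8
                    omega
                  have hfgle : fg (Comp.loop m0) ≤ fcv (G.erase (Comp.chain 3)) :=
                    fg_le_fcv hq0 hge8
                  refine ⟨m0, hq0, ?_⟩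
                  have hfgm : fg (Comp.loop m0) = m0 - 8 := rfl
                  omega
              have hLG : Comp.loop L ∈ G := Multiset.mem_of_mem_erase hLmem
              have hle := v_le_fstep hLG
              rw [fstep_loop] at hle
              have hc3mem : Comp.chain 3 ∈ G.erase (Comp.loop L) :=
                (Multiset.mem_erase_of_ne (by simp)).mpr h3
              have hcomm : (G.erase (Comp.loop L)).erase (Comp.chain 3) =
                  (G.erase (Comp.chain 3)).erase (Comp.loop L) :=
                Multiset.erase_comm G (Comp.loop L) (Comp.chain 3)
              by_cases hrest : (G.erase (Comp.chain 3)).erase (Comp.loop L) = 0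
              · have hGL : G.erase (Comp.loop L) = {Comp.chain 3} :=
                  eq_singleton_of_erase_eq_zero hc3mem (hcomm.trans hrest)
                rw [hGL, v_singleton_chain] at hle
                have hG'L : G.erase (Comp.chain 3) = {Comp.loop L} :=
                  eq_singleton_of_erase_eq_zero hLmem hrest
                have hfcv' : fcv (G.erase (Comp.chain 3)) = L - 8 := by
                  rw [hG'L, fcv_singleton]; rfl
                have habs1 : |(3:ℤ) - 4| = 1 := by norm_num
                rw [habs1] at hle
                refine le_trans hle (le_trans ?_ (le_max_left _ _))
                omega
              · have hIH2 := IH _ (Multiset.erase_lt.mpr hLG) (loony_erase hG _)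
                obtain ⟨q1, hq1⟩ := Multiset.exists_mem_of_ne_zero hrest
                have hq1G' : q1 ∈ G.erase (Comp.chain 3) := Multiset.mem_of_mem_erase hq1
                obtain ⟨m1, rfl, hm14, hm1e⟩ := hloops q1 hq1G'
                have hq1G'' : Comp.loop m1 ∈ G.erase (Comp.loop L) := by
                  rw [← hcomm] at hq1
                  exact Multiset.mem_of_mem_erase hq1
                have hG''ne : G.erase (Comp.loop L) ≠ 0 := by
                  intro h; rw [h] at hc3mem; simp at hc3mem
                have htb'' : tb (G.erase (Comp.loop L)) = 6 := by
                  apply tb_eq_six hG''ne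
                  · rintro (⟨d, hd4, hdm⟩ | hnl)
                    · exact hnb d hd4 (Multiset.mem_of_mem_erase hdm)
                    · exact hnl m1 hq1G''
                  · exact fun h => h 3 hc3mem
                have hfcv2 := fcv_erase hLG
                have hfgL : fg (Comp.loop L) = L - 8 := rfl
                have hcvG'' := cv_def (G.erase (Comp.loop L))
                have hcv''4 : 4 ≤ cv (G.erase (Comp.loop L)) := by omega
                have hveq2 : v (G.erase (Comp.loop L)) = cv (G.erase (Comp.loop L)) :=
                  le_antisymm (le_trans hIH2.2.1 (max_le le_rfl (by omega))) hIH2.1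
                have habs := abs_cases (v (G.erase (Comp.loop L)) - 4)
                refine le_trans hle (le_trans ?_ (le_max_left _ _))
                rcases habs with ⟨he, _⟩ | ⟨he, _⟩ <;> omega
            · push_neg at hnc'
              obtain ⟨d, hdm'⟩ := hnc'
              have htble : tb (G.erase (Comp.chain 3)) ≤ tb G := by
                by_cases h4 : (∃ e, 4 ≤ e ∧ Comp.chain e ∈ G) ∨ (∀ m, Comp.loop m ∉ G)
                · have h4' : (∃ e, 4 ≤ e ∧ Comp.chain e ∈ G.erase (Comp.chain 3)) ∨
                      (∀ m, Comp.loop m ∉ G.erase (Comp.chain 3)) := by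
                    rcases h4 with ⟨e, he4, hem⟩ | hnl
                    · refine Or.inl ⟨e, he4, (Multiset.mem_erase_of_ne ?_).mpr hem⟩
                      intro hh; rw [Comp.chain.injEq] at hh; omega
                    · exact Or.inr (fun m hm => hnl m (Multiset.mem_of_mem_erase hm))
                  rw [tb_eq_four hne h4, tb_eq_four hG0 h4']
                · rw [tb_eq_six hne h4 (fun h => h 3 h3)]
                  by_cases h4' : (∃ e, 4 ≤ e ∧ Comp.chain e ∈ G.erase (Comp.chain 3)) ∨
                      (∀ m, Comp.loop m ∉ G.erase (Comp.chain 3))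
                  · rw [tb_eq_four hG0 h4']; norm_num
                  · rw [tb_eq_six hG0 h4' (fun h => h d hdm')]
              have hle := v_le_fstep h3
              rw [fstep_chain] at hle
              have habs := abs_cases (v (G.erase (Comp.chain 3)) - 2)
              refine le_trans hle (le_trans ?_ (le_max_left _ _))
              rcases habs with ⟨he, _⟩ | ⟨he, _⟩ <;> omega
      exact ⟨le_trans hmain (max_le_max le_rfl (by norm_num)), fun _ => hmain⟩
    · refine ⟨?_, fun h => absurd h h3⟩
      by_cases hloopex : ∃ m, Comp.loop m ∈ G
      · obtain ⟨L, hLG, hsel⟩ : ∃ L, Comp.loop L ∈ G ∧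
            (L = 4 ∨ (L = 6 ∧ Comp.loop 4 ∉ G) ∨ (∀ m, Comp.loop m ∈ G → 8 ≤ m)) := by
          by_cases h4 : Comp.loop 4 ∈ G
          · exact ⟨4, h4, Or.inl rfl⟩
          · by_cases h6 : Comp.loop 6 ∈ G
            · exact ⟨6, h6, Or.inr (Or.inl ⟨rfl, h4⟩)⟩
            · obtain ⟨m, hm⟩ := hloopex
              refine ⟨m, hm, Or.inr (Or.inr (fun m' hm' => ?_))⟩
              obtain ⟨hm'4, hm'e⟩ := loony_loop hG hm'
              have hn4 : m' ≠ 4 := by intro h; rw [h] at hm'; exact h4 hm'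
              have hn6 : m' ≠ 6 := by intro h; rw [h] at hm'; exact h6 hm'
              obtain ⟨r, hr⟩ := hm'e
              omega
        have hL4 := (loony_loop hG hLG).1
        have hle := v_le_fstep hLG
        rw [fstep_loop] at hle
        have hfcv := fcv_erase hLG
        have hfgL : fg (Comp.loop L) = L - 8 := rfl
        have hcvG := cv_def G
        by_cases hG0 : G.erase (Comp.loop L) = 0
        · have hGs : G = {Comp.loop L} := eq_singleton_of_erase_eq_zero hLG hG0
          rw [hG0, v_zero] at hle
          have htb : tb G = 8 := by
            apply tb_eq_eight hne
            · rintro (⟨d, hd4, hdm⟩ | hnl)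
              · rw [hGs] at hdm; simp at hdm
              · exact hnl L hLG
            · intro d hdm
              rw [hGs] at hdm; simp at hdm
          have hfcvs : fcv G = L - 8 := by rw [hGs, fcv_singleton]; rfl
          have habs : |(0:ℤ) - 4| = 4 := by norm_num
          rw [habs] at hle
          exact le_trans hle (le_trans (by omega) (le_max_left _ _))
        · have hIH := IH _ (Multiset.erase_lt.mpr hLG) (loony_erase hG _)
          have hcvG' := cv_def (G.erase (Comp.loop L))
          have hv'0 : 0 ≤ v (G.erase (Comp.loop L)) := v_nonneg (loony_erase hG _)
          by_cases hcv4 : 4 ≤ cv (G.erase (Comp.loop L))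
          · have hveq : v (G.erase (Comp.loop L)) = cv (G.erase (Comp.loop L)) :=
              le_antisymm (le_trans hIH.2.1 (max_le le_rfl hcv4)) hIH.1
            have htble : tb (G.erase (Comp.loop L)) ≤ tb G := by
              by_cases hch : ∃ d, Comp.chain d ∈ G
              · obtain ⟨d, hdm⟩ := hch
                have hd3 := loony_chain hG hdm
                have hd4 : 4 ≤ d := by
                  have : d ≠ 3 := by intro h; rw [h] at hdm; exact h3 hdm
                  omega
                have hdm' : Comp.chain d ∈ G.erase (Comp.loop L) :=
                  (Multiset.mem_erase_of_ne (by simp)).mpr hdm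
                rw [tb_eq_four hne (Or.inl ⟨d, hd4, hdm⟩),
                  tb_eq_four hG0 (Or.inl ⟨d, hd4, hdm'⟩)]
              · push_neg at hch
                have htbG : tb G = 8 := by
                  apply tb_eq_eight hne _ hch
                  rintro (⟨d, hd4, hdm⟩ | hnl)
                  · exact hch d hdm
                  · exact hnl L hLG
                rw [htbG]
                exact tb_le_eight _
            have habs := abs_cases (v (G.erase (Comp.loop L)) - 4)
            refine le_trans hle (le_trans ?_ (le_max_left _ _))
            rcases habs with ⟨he, _⟩ | ⟨he, _⟩ <;> omega
          · have hv'4 : v (G.erase (Comp.loop L)) ≤ 4 :=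
              le_trans hIH.2.1 (max_le (by omega) le_rfl)
            have habs := abs_cases (v (G.erase (Comp.loop L)) - 4)
            rcases hsel with rfl | ⟨hL6, hno4⟩ | hall8
            · refine le_trans hle (le_trans ?_ (le_max_right _ _))
              rcases habs with ⟨he, _⟩ | ⟨he, _⟩ <;> omega
            · have h2v : 2 ≤ v (G.erase (Comp.loop L)) := by
                apply two_le_v hG0
                · intro c hc
                  have h3c := loony_chain hG (Multiset.mem_of_mem_erase hc)
                  have : c ≠ 3 := by
                    intro h; rw [h] at hc
                    exact h3 (Multiset.mem_of_mem_erase hc)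
                  omega
                · intro m hm
                  obtain ⟨hm4, hme⟩ := loony_loop hG (Multiset.mem_of_mem_erase hm)
                  have : m ≠ 4 := by
                    intro h; rw [h] at hm
                    exact hno4 (Multiset.mem_of_mem_erase hm)
                  obtain ⟨r, hr⟩ := hme
                  omega
              refine le_trans hle (le_trans ?_ (le_max_right _ _))
              rcases habs with ⟨he, _⟩ | ⟨he, _⟩ <;> omega
            · exfalso
              have hfcv'0 : 0 ≤ fcv (G.erase (Comp.loop L)) := by
                apply fcv_nonneg
                intro q hq
                cases q with
                | chain e =>
                  have h3e := loony_chain hG (Multiset.mem_of_mem_erase hq)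
                  have : e ≠ 3 := by
                    intro h; rw [h] at hq
                    exact h3 (Multiset.mem_of_mem_erase hq)
                  show 0 ≤ e - 4
                  omega
                | loop m =>
                  have := hall8 m (Multiset.mem_of_mem_erase hq)
                  show 0 ≤ m - 8
                  omega
              have := four_le_tb hG0
              omega
      · obtain ⟨q, hq⟩ := Multiset.exists_mem_of_ne_zero hne
        obtain ⟨c, rfl⟩ : ∃ c, q = Comp.chain c := by
          cases q with
          | chain c => exact ⟨c, rfl⟩
          | loop m => exact absurd ⟨m, hq⟩ hloopex
        have hc3 := loony_chain hG hq
        have hc4 : 4 ≤ c := by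
          have : c ≠ 3 := by intro h; rw [h] at hq; exact h3 hq
          omega
        have hle := v_le_fstep hq
        rw [fstep_chain] at hle
        have hfcv := fcv_erase hq
        have hfgc : fg (Comp.chain c) = c - 4 := rfl
        have hcvG := cv_def G
        have htbG : tb G = 4 := tb_eq_four hne (Or.inr (fun m hm => hloopex ⟨m, hm⟩))
        by_cases hG0 : G.erase (Comp.chain c) = 0
        · have hGs : G = {Comp.chain c} := eq_singleton_of_erase_eq_zero hq hG0
          rw [hG0, v_zero] at hle
          have habs : |(0:ℤ) - 2| = 2 := by norm_num
          rw [habs] at hle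
          have hfcvs : fcv G = c - 4 := by rw [hGs, fcv_singleton]; rfl
          refine le_trans hle (le_trans (by omega) (le_max_left _ _))
        · have hIH := IH _ (Multiset.erase_lt.mpr hq) (loony_erase hG _)
          have hcvG' := cv_def (G.erase (Comp.chain c))
          have htb' : tb (G.erase (Comp.chain c)) = 4 :=
            tb_eq_four hG0 (Or.inr (fun m hm => hloopex ⟨m, Multiset.mem_of_mem_erase hm⟩))
          have hfcv'0 : 0 ≤ fcv (G.erase (Comp.chain c)) := by
            apply fcv_nonneg
            intro q' hq'
            cases q' with
            | chain e =>
              have h3e := loony_chain hG (Multiset.mem_of_mem_erase hq')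
              have : e ≠ 3 := by
                intro h; rw [h] at hq'
                exact h3 (Multiset.mem_of_mem_erase hq')
              show 0 ≤ e - 4
              omega
            | loop m => exact absurd ⟨m, Multiset.mem_of_mem_erase hq'⟩ hloopex
          have hcv4 : 4 ≤ cv (G.erase (Comp.chain c)) := by omega
          have hveq : v (G.erase (Comp.chain c)) = cv (G.erase (Comp.chain c)) :=
            le_antisymm (le_trans hIH.2.1 (max_le le_rfl hcv4)) hIH.1
          have habs := abs_cases (v (G.erase (Comp.chain c)) - 2)
          refine le_trans hle (le_trans ?_ (le_max_left _ _))
          rcases habs with ⟨he, _⟩ | ⟨he, _⟩ <;> omega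
  exact ⟨part1, part23.1, part23.2⟩

theorem stmt13 (G : Multiset Comp) (hG : IsSimpleLoony G) :
    (5 ≤ v G → cv G = v G) ∧
    (v G = 4 → Comp.chain 3 ∈ G → cv G = v G) := by
  obtain ⟨h1, h2, h3⟩ := key G hG
  constructor
  · intro h5
    rcases le_or_gt (cv G) 4 with hc | hc
    · have : v G ≤ 4 := le_trans h2 (max_le hc le_rfl)
      omega
    · have : v G ≤ cv G := le_trans h2 (max_le le_rfl (by omega))
      omega
  · intro h4 hc3
    rcases le_or_gt (cv G) 3 with hc | hc
    · have : v G ≤ 3 := le_trans (h3 hc3) (max_le hc le_rfl)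
      omega
    · have : v G ≤ cv G := le_trans (h3 hc3) (max_le le_rfl (by omega))
      omega
end

section
/- Let G be a nonempty simple loony endgame with no chain of length 3, no loop of length 4, and cv(G) ≤ 1. If cv(G) is odd then v(G) = 3; if cv(G) is even then v(G) ∈ {2, 4} with v(G) ≡ cv(G) (mod 4). -/
/-! ### Auxiliary integer function and arithmetic lemmas -/

/-- The closed form for the value in terms of the controlled value. -/
def g (x : ℤ) : ℤ :=
  if 2 ≤ x then x else if x % 2 = 1 then 3 else if x % 4 = 0 then 4 else 2

lemma g_ge (x : ℤ) : 2 ≤ g x := by unfold g; split_ifs <;> omega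

lemma chain_lb (t x : ℤ) (ht : 0 ≤ t) : g x ≤ t + g (x - t) := by
  unfold g; split_ifs <;> omega

lemma chainlast_lb (t x : ℤ) (ht : 0 ≤ t) : g x ≤ t + g (x - t + 4) := by
  unfold g; split_ifs <;> omega

lemma loop_lb (s x : ℤ) (hs : -2 ≤ s) (hpar : s % 2 = 0) :
    g x ≤ s + 4 + |g (x - s) - 4| := by
  rcases abs_cases (g (x - s) - 4) with ⟨h1, h2⟩ | ⟨h1, h2⟩ <;> rw [h1] <;>
    unfold g at h2 ⊢ <;> split_ifs at h2 ⊢ <;> omega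

lemma E6 (x : ℤ) : g x = 6 - 4 + |g (x + 2) - 4| := by
  rcases abs_cases (g (x + 2) - 4) with ⟨h1, h2⟩ | ⟨h1, h2⟩ <;> rw [h1] <;>
    unfold g at h2 ⊢ <;> split_ifs at h2 ⊢ <;> omega

lemma Ebig (s x : ℤ) (hs : 0 ≤ s) (hx : 4 ≤ x - s) : g x = s + 4 + |g (x - s) - 4| := by
  have h4 : g (x - s) = x - s := by unfold g; split_ifs <;> omega
  rw [h4, abs_of_nonneg (by omega)]
  unfold g; split_ifs <;> omega

lemma Echain (t x : ℤ) (ht : 0 ≤ t) (hx : 2 ≤ x - t) : g x = t + g (x - t) := by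
  unfold g; split_ifs <;> omega

lemma vAux_eq_v : ∀ (n : ℕ) (G : Multiset Comp), Multiset.card G ≤ n → vAux n G = v G := by
  intro n
  induction n with
  | zero =>
    intro G h
    have hG : G = 0 := Multiset.card_eq_zero.mp (Nat.le_zero.mp h)
    subst hG; rw [vAux_zero, v_zero]
  | succ n ih =>
    intro G h
    by_cases hG : G = 0
    · subst hG; rw [vAux_zero, v_zero]
    · have hcard : 0 < Multiset.card G := Multiset.card_pos.mpr hG
      obtain ⟨m, hm⟩ : ∃ m, Multiset.card G = m + 1 := ⟨Multiset.card G - 1, by omega⟩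
      have key : ∀ p ∈ G, vAux n (G.erase p) = vAux m (G.erase p) := by
        intro p hp
        have hce : Multiset.card (G.erase p) = m := by
          rw [Multiset.card_erase_of_mem hp, hm]; rfl
        have h1 : vAux n (G.erase p) = v (G.erase p) := ih _ (by omega)
        have h2 : vAux m (G.erase p) = v (G.erase p) := by
          rw [v, hce]
        rw [h1, h2]
      rw [v, hm]
      show vAux (n + 1) G = vAux (m + 1) G
      simp only [vAux, if_neg hG]
      congr 1
      ext x
      simp only [Set.mem_setOf_eq]
      constructor <;> rintro ⟨p, hp, rfl⟩ <;> refine ⟨p, hp, ?_⟩ <;>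
        cases p <;> rw [key _ hp]

lemma v_rec (G : Multiset Comp) (hG : G ≠ 0) :
    v G = sInf { x : ℤ | ∃ p ∈ G,
      x = match p with
        | Comp.chain c => c - 2 + |v (G.erase p) - 2|
        | Comp.loop l => l - 4 + |v (G.erase p) - 4| } := by
  have hcard : 0 < Multiset.card G := Multiset.card_pos.mpr hG
  obtain ⟨m, hm⟩ : ∃ m, Multiset.card G = m + 1 := ⟨Multiset.card G - 1, by omega⟩
  rw [v, hm]
  simp only [vAux, if_neg hG]
  congr 1
  ext x
  simp only [Set.mem_setOf_eq]
  constructor <;> rintro ⟨p, hp, rfl⟩ <;> refine ⟨p, hp, ?_⟩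
  all_goals
    have hce : Multiset.card (G.erase p) = m := by
      rw [Multiset.card_erase_of_mem hp, hm]; rfl
    have hk : vAux m (G.erase p) = v (G.erase p) := by rw [v, hce]
    cases p <;> rw [hk]

/-! ### Structural lemmas -/

lemma chain_ge4 {G : Multiset Comp} (hG : IsSimpleLoony G) (hno3 : Comp.chain 3 ∉ G)
    {c : ℤ} (hc : Comp.chain c ∈ G) : 4 ≤ c := by
  have h3 : (3 : ℤ) ≤ c := hG _ hc
  by_contra hlt
  have hc3 : c = 3 := by omega
  exact hno3 (hc3 ▸ hc)

lemma loop_ge6 {G : Multiset Comp} (hG : IsSimpleLoony G) (hno4 : Comp.loop 4 ∉ G)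
    {l : ℤ} (hl : Comp.loop l ∈ G) : 6 ≤ l ∧ l % 2 = 0 := by
  have h : 4 ≤ l ∧ Even l := hG _ hl
  have he : l % 2 = 0 := Int.even_iff.mp h.2
  refine ⟨?_, he⟩
  by_contra hlt
  have hl4 : l = 4 := by omega
  exact hno4 (hl4 ▸ hl)

lemma tb_chain {G : Multiset Comp} (hne : G ≠ 0)
    (h : (∃ c, 4 ≤ c ∧ Comp.chain c ∈ G) ∨ ∀ l, Comp.loop l ∉ G) : tb G = 4 := by
  unfold tb; rw [if_neg hne, if_pos h]

lemma tb_loops {G : Multiset Comp} (hne : G ≠ 0) (h : ∀ c, Comp.chain c ∉ G) : tb G = 8 := by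
  have hl : ∃ l, Comp.loop l ∈ G := by
    obtain ⟨p, hp⟩ := Multiset.exists_mem_of_ne_zero hne
    cases p with
    | chain c => exact absurd hp (h c)
    | loop l => exact ⟨l, hp⟩
  unfold tb
  rw [if_neg hne, if_neg, if_pos h]
  rintro (⟨c, _, hc⟩ | hnl)
  · exact h c hc
  · obtain ⟨l, hl'⟩ := hl
    exact hnl l hl'

lemma fcv_cons_s15 (p : Comp) (H : Multiset Comp) :
    fcv (p ::ₘ H)
      = (match p with | Comp.chain c => c - 4 | Comp.loop l => l - 8) + fcv H := by
  simp [fcv]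

lemma fcv_erase_chain {G : Multiset Comp} {c : ℤ} (hp : Comp.chain c ∈ G) :
    fcv G = (c - 4) + fcv (G.erase (Comp.chain c)) := by
  conv_lhs => rw [← Multiset.cons_erase hp]
  simp [fcv]

lemma fcv_erase_loop {G : Multiset Comp} {l : ℤ} (hp : Comp.loop l ∈ G) :
    fcv G = (l - 8) + fcv (G.erase (Comp.loop l)) := by
  conv_lhs => rw [← Multiset.cons_erase hp]
  simp [fcv]

lemma fcv_nonneg_s15 {H : Multiset Comp}
    (h : ∀ p ∈ H, (0 : ℤ) ≤ match p with | Comp.chain c => c - 4 | Comp.loop l => l - 8) :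
    0 ≤ fcv H := by
  apply Multiset.sum_nonneg
  intro x hx
  obtain ⟨p, hp, rfl⟩ := Multiset.mem_map.mp hx
  exact h p hp

/-! ### The main induction -/

lemma v_eq_g : ∀ G : Multiset Comp, IsSimpleLoony G → Comp.chain 3 ∉ G →
    Comp.loop 4 ∉ G → G ≠ 0 → v G = g (cv G) := by
  intro G
  induction G using Multiset.strongInductionOn with
  | _ G IH =>
  intro hG hno3 hno4 hne
  rw [v_rec G hne]
  apply IsLeast.csInf_eq
  -- facts inherited by sub-multisets
  have hsub : ∀ p : Comp, IsSimpleLoony (G.erase p) ∧ Comp.chain 3 ∉ (G.erase p) ∧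
      Comp.loop 4 ∉ (G.erase p) := by
    intro p
    refine ⟨fun q hq => hG q (Multiset.mem_of_le (Multiset.erase_le p G) hq), ?_, ?_⟩
    · exact fun h => hno3 (Multiset.mem_of_le (Multiset.erase_le p G) h)
    · exact fun h => hno4 (Multiset.mem_of_le (Multiset.erase_le p G) h)
  have hIH : ∀ p ∈ G, G.erase p ≠ 0 → v (G.erase p) = g (cv (G.erase p)) := by
    intro p hp hne'
    exact IH _ (Multiset.erase_lt.mpr hp) (hsub p).1 (hsub p).2.1 (hsub p).2.2 hne'
  -- tb of G.erase (loop l) equals tb of G, when nonempty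
  have htb_loop : ∀ l : ℤ, Comp.loop l ∈ G → G.erase (Comp.loop l) ≠ 0 →
      tb (G.erase (Comp.loop l)) = tb G := by
    intro l hl hne'
    by_cases hch : ∃ c, Comp.chain c ∈ G
    · obtain ⟨c, hc⟩ := hch
      have hc4 : 4 ≤ c := chain_ge4 hG hno3 hc
      have hc' : Comp.chain c ∈ G.erase (Comp.loop l) :=
        (Multiset.mem_erase_of_ne (by simp)).mpr hc
      rw [tb_chain hne' (Or.inl ⟨c, hc4, hc'⟩), tb_chain hne (Or.inl ⟨c, hc4, hc⟩)]
    · push_neg at hch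
      have hch' : ∀ c, Comp.chain c ∉ G.erase (Comp.loop l) := by
        intro c h
        exact hch c (Multiset.mem_of_le (Multiset.erase_le _ G) h)
      rw [tb_loops hne' hch', tb_loops hne hch]
  constructor
  · -- membership: some move achieves g (cv G)
    by_cases h6 : Comp.loop 6 ∈ G
    · refine ⟨Comp.loop 6, h6, ?_⟩
      show g (cv G) = 6 - 4 + |v (G.erase (Comp.loop 6)) - 4|
      by_cases he : G.erase (Comp.loop 6) = 0
      · have hGe : G = {Comp.loop 6} := by
          rw [← Multiset.cons_erase h6, he]; rfl
        have hcv : cv G = 6 := by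
          rw [cv, hGe, tb_loops (by simp) (by intro c h; simp at h)]
          simp [fcv]
        rw [he, v_zero, hcv]
        unfold g; norm_num
      · have hv' := hIH _ h6 he
        have hcv' : cv (G.erase (Comp.loop 6)) = cv G + 2 := by
          rw [cv, cv, htb_loop 6 h6 he, fcv_erase_loop h6]; ring
        rw [hv', hcv']
        exact E6 (cv G)
    · by_cases hloop : ∃ l, Comp.loop l ∈ G
      · obtain ⟨l, hl⟩ := hloop
        have hl6 := loop_ge6 hG hno4 hl
        have hl8 : 8 ≤ l := by
          rcases hl6 with ⟨h1, h2⟩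
          have : l ≠ 6 := fun h => h6 (h ▸ hl)
          omega
        refine ⟨Comp.loop l, hl, ?_⟩
        show g (cv G) = l - 4 + |v (G.erase (Comp.loop l)) - 4|
        by_cases he : G.erase (Comp.loop l) = 0
        · have hGe : G = {Comp.loop l} := by
            rw [← Multiset.cons_erase hl, he]; rfl
          have hcv : cv G = l := by
            rw [cv, hGe, tb_loops (by simp) (by intro c h; simp at h)]
            simp [fcv]
          rw [he, v_zero, hcv]
          have : g l = l := by unfold g; split_ifs <;> omega
          rw [this]
          rw [abs_of_nonpos (by omega)]
          ring
        · have hv' := hIH _ hl he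
          have hcv' : cv (G.erase (Comp.loop l)) = cv G - (l - 8) := by
            rw [cv, cv, htb_loop l hl he, fcv_erase_loop hl]; ring
          have hfcv : (0 : ℤ) ≤ fcv (G.erase (Comp.loop l)) := by
            apply fcv_nonneg_s15
            intro q hq
            have hqG : q ∈ G := Multiset.mem_of_le (Multiset.erase_le _ G) hq
            cases q with
            | chain c =>
              have := chain_ge4 hG hno3 hqG
              simpa using by omega
            | loop l' =>
              have h6' := loop_ge6 hG hno4 hqG
              have : l' ≠ 6 := fun h => h6 (h ▸ hqG)
              simpa using by omega
          have htbge : (4 : ℤ) ≤ tb (G.erase (Comp.loop l)) := by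
            rw [htb_loop l hl he]
            by_cases hch : ∃ c, Comp.chain c ∈ G
            · obtain ⟨c, hc⟩ := hch
              rw [tb_chain hne (Or.inl ⟨c, chain_ge4 hG hno3 hc, hc⟩)]
            · push_neg at hch
              rw [tb_loops hne hch]; norm_num
          have hge4 : 4 ≤ cv G - (l - 8) := by
            have : cv (G.erase (Comp.loop l)) = fcv (G.erase (Comp.loop l))
                + tb (G.erase (Comp.loop l)) := rfl
            omega
          rw [hv', hcv']
          have := Ebig (l - 8) (cv G) (by omega) (by omega)
          rw [this]; ring_nf
      · -- no loops at all: G consists of chains only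
        push_neg at hloop
        obtain ⟨p, hp⟩ := Multiset.exists_mem_of_ne_zero hne
        obtain ⟨c, rfl⟩ : ∃ c, p = Comp.chain c := by
          cases p with
          | chain c => exact ⟨c, rfl⟩
          | loop l => exact absurd hp (hloop l)
        have hc4 : 4 ≤ c := chain_ge4 hG hno3 hp
        refine ⟨Comp.chain c, hp, ?_⟩
        show g (cv G) = c - 2 + |v (G.erase (Comp.chain c)) - 2|
        by_cases he : G.erase (Comp.chain c) = 0
        · have hGe : G = {Comp.chain c} := by
            rw [← Multiset.cons_erase hp, he]; rfl
          have hcv : cv G = c := by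
            rw [cv, hGe, tb_chain (by simp) (Or.inr (by intro l h; simp at h))]
            simp [fcv]
          rw [he, v_zero, hcv]
          have : g c = c := by unfold g; split_ifs <;> omega
          rw [this, abs_of_nonpos (by omega)]
          ring
        · have hv' := hIH _ hp he
          have hnl' : ∀ l, Comp.loop l ∉ G.erase (Comp.chain c) := by
            intro l h
            exact hloop l (Multiset.mem_of_le (Multiset.erase_le _ G) h)
          have htb' : tb (G.erase (Comp.chain c)) = 4 := tb_chain he (Or.inr hnl')
          have htbG : tb G = 4 := tb_chain hne (Or.inl ⟨c, hc4, hp⟩)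
          have hcv' : cv (G.erase (Comp.chain c)) = cv G - (c - 4) := by
            rw [cv, cv, htb', htbG, fcv_erase_chain hp]; ring
          have hfcv : (0 : ℤ) ≤ fcv (G.erase (Comp.chain c)) := by
            apply fcv_nonneg_s15
            intro q hq
            have hqG : q ∈ G := Multiset.mem_of_le (Multiset.erase_le _ G) hq
            cases q with
            | chain c' =>
              have := chain_ge4 hG hno3 hqG
              simpa using by omega
            | loop l' => exact absurd hqG (hloop l')
          have hge2 : 2 ≤ cv G - (c - 4) := by
            have : cv (G.erase (Comp.chain c)) = fcv (G.erase (Comp.chain c))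
                + tb (G.erase (Comp.chain c)) := rfl
            omega
          rw [hv', hcv']
          have hE := Echain (c - 4) (cv G) (by omega) (by omega)
          have hab : |g (cv G - (c - 4)) - 2| = g (cv G - (c - 4)) - 2 :=
            abs_of_nonneg (by have := g_ge (cv G - (c - 4)); omega)
          rw [hab, hE]; ring
  · -- lower bound: every move is at least g (cv G)
    rintro x ⟨p, hp, rfl⟩
    cases p with
    | chain c =>
      have hc4 : 4 ≤ c := chain_ge4 hG hno3 hp
      show g (cv G) ≤ c - 2 + |v (G.erase (Comp.chain c)) - 2|
      by_cases he : G.erase (Comp.chain c) = 0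
      · have hGe : G = {Comp.chain c} := by
          rw [← Multiset.cons_erase hp, he]; rfl
        have hcv : cv G = c := by
          rw [cv, hGe, tb_chain (by simp) (Or.inr (by intro l h; simp at h))]
          simp [fcv]
        rw [he, v_zero, hcv]
        have : g c = c := by unfold g; split_ifs <;> omega
        rw [this, abs_of_nonpos (by omega)]
        omega
      · have hv' := hIH _ hp he
        have htbG : tb G = 4 := tb_chain hne (Or.inl ⟨c, hc4, hp⟩)
        have hab : |v (G.erase (Comp.chain c)) - 2| = g (cv (G.erase (Comp.chain c))) - 2 := by
          rw [hv']
          exact abs_of_nonneg (by have := g_ge (cv (G.erase (Comp.chain c))); omega)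
        rw [hab]
        by_cases hch : ∃ c', Comp.chain c' ∈ G.erase (Comp.chain c)
        · obtain ⟨c', hc'⟩ := hch
          have hc'4 : 4 ≤ c' :=
            chain_ge4 hG hno3 (Multiset.mem_of_le (Multiset.erase_le _ G) hc')
          have htb' : tb (G.erase (Comp.chain c)) = 4 := tb_chain he (Or.inl ⟨c', hc'4, hc'⟩)
          have hcv' : cv (G.erase (Comp.chain c)) = cv G - (c - 4) := by
            rw [cv, cv, htb', htbG, fcv_erase_chain hp]; ring
          rw [hcv']
          have := chain_lb (c - 4) (cv G) (by omega)
          omega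
        · push_neg at hch
          have htb' : tb (G.erase (Comp.chain c)) = 8 := tb_loops he hch
          have hcv' : cv (G.erase (Comp.chain c)) = cv G - (c - 4) + 4 := by
            rw [cv, cv, htb', htbG, fcv_erase_chain hp]; ring
          rw [hcv']
          have := chainlast_lb (c - 4) (cv G) (by omega)
          omega
    | loop l =>
      have hl6 := loop_ge6 hG hno4 hp
      show g (cv G) ≤ l - 4 + |v (G.erase (Comp.loop l)) - 4|
      by_cases he : G.erase (Comp.loop l) = 0
      · have hGe : G = {Comp.loop l} := by
          rw [← Multiset.cons_erase hp, he]; rfl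
        have hcv : cv G = l := by
          rw [cv, hGe, tb_loops (by simp) (by intro c h; simp at h)]
          simp [fcv]
        rw [he, v_zero, hcv]
        have : g l = l := by unfold g; split_ifs <;> omega
        rw [this, abs_of_nonpos (by omega)]
        omega
      · have hv' := hIH _ hp he
        have hcv' : cv (G.erase (Comp.loop l)) = cv G - (l - 8) := by
          rw [cv, cv, htb_loop l hp he, fcv_erase_loop hp]; ring
        rw [hv', hcv']
        have := loop_lb (l - 8) (cv G) (by omega) (by omega)
        omega

theorem stmt15 (G : Multiset Comp) (hG : IsSimpleLoony G) (hne : G ≠ 0)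
    (hno3 : Comp.chain 3 ∉ G) (hno4l : Comp.loop 4 ∉ G) (hcv : cv G ≤ 1) :
    (Odd (cv G) → v G = 3) ∧
    (Even (cv G) → v G ∈ ({2, 4} : Set ℤ) ∧ v G ≡ cv G [ZMOD 4]) := by
  have hv := v_eq_g G hG hno3 hno4l hne
  constructor
  · intro hodd
    have h1 : cv G % 2 = 1 := Int.odd_iff.mp hodd
    rw [hv]; unfold g; split_ifs <;> omega
  · intro heven
    have h0 : cv G % 2 = 0 := Int.even_iff.mp heven
    constructor
    · simp only [Set.mem_insert_iff, Set.mem_singleton_iff]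
      rw [hv]; unfold g; split_ifs <;> omega
    · show v G % 4 = cv G % 4
      rw [hv]; unfold g; split_ifs <;> omega
end

section
/- Let G be the simple loony endgame consisting of one chain of length 3, one chain of length 4, one hundred loops of length 4, and one hundred loops of length 6. Then v(G) = 3. -/
namespace SL

def optv (p : Comp) (w : ℤ) : ℤ :=
  match p with
  | .chain c => c - 2 + |w - 2|
  | .loop l => l - 4 + |w - 4|

lemma v_eq (G : Multiset Comp) (hG : G ≠ 0) :
    v G = sInf {x : ℤ | ∃ p ∈ G, x = optv p (v (G.erase p))} := by
  obtain ⟨k, hk⟩ : ∃ k, Multiset.card G = k + 1 := by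
    have := Multiset.card_pos.mpr hG
    exact ⟨Multiset.card G - 1, by omega⟩
  have hstep : ∀ p ∈ G, vAux k (G.erase p) = v (G.erase p) := by
    intro p hp
    have hc : Multiset.card (G.erase p) = k := by
      rw [Multiset.card_erase_of_mem hp, hk]; rfl
    show vAux k (G.erase p) = vAux (Multiset.card (G.erase p)) (G.erase p)
    rw [hc]
  show vAux (Multiset.card G) G = _
  rw [hk]
  simp only [vAux]
  rw [if_neg hG]
  congr 1
  ext x
  simp only [Set.mem_setOf_eq]
  constructor
  · rintro ⟨p, hp, rfl⟩
    exact ⟨p, hp, by cases p <;> simp [optv, hstep _ hp]⟩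
  · rintro ⟨p, hp, rfl⟩
    exact ⟨p, hp, by cases p <;> simp [optv, hstep _ hp]⟩

lemma card_le_of_erase {G : Multiset Comp} {p : Comp} {N : ℕ}
    (hp : p ∈ G) (h : Multiset.card G ≤ N + 1) : Multiset.card (G.erase p) ≤ N := by
  rw [Multiset.card_erase_of_mem hp, Nat.pred_eq_sub_one]
  omega

def Gm (a b : Bool) (m n : ℕ) : Multiset Comp :=
  (cond a {Comp.chain 3} 0) + (cond b {Comp.chain 4} 0)
    + Multiset.replicate m (Comp.loop 4) + Multiset.replicate n (Comp.loop 6)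

def f (a b : Bool) (m n : ℕ) : ℤ :=
  match a, b with
  | true, true => if m % 2 = 0 ∧ n % 2 = 0 then 3 else 1
  | true, false => if (m % 2 = 0 ∧ n % 2 = 0) ∨ (m = 0 ∧ n = 1) then 3 else 1
  | false, true => if n % 2 = 1 then 2 else if m % 2 = 0 then 4 else 0
  | false, false =>
      if m = 0 ∧ n = 0 then 0
      else if m = 0 ∧ n = 1 then 6
      else if n % 2 = 1 then 2
      else if m % 2 = 0 then (if n = 0 then 0 else 4)
      else (if n = 0 then 4 else 0)

lemma mem_Gm {p : Comp} {a b : Bool} {m n : ℕ} : p ∈ Gm a b m n ↔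
    (a = true ∧ p = Comp.chain 3) ∨ (b = true ∧ p = Comp.chain 4) ∨
    (m ≠ 0 ∧ p = Comp.loop 4) ∨ (n ≠ 0 ∧ p = Comp.loop 6) := by
  cases a <;> cases b <;> simp [Gm, Multiset.mem_replicate]

lemma card_Gm (a b : Bool) (m n : ℕ) :
    Multiset.card (Gm a b m n) = (cond a 1 0) + (cond b 1 0) + m + n := by
  cases a <;> cases b <;> simp [Gm] <;> omega

lemma erase_c3 (b : Bool) (m n : ℕ) :
    (Gm true b m n).erase (Comp.chain 3) = Gm false b m n := by
  have h : Gm true b m n = Comp.chain 3 ::ₘ Gm false b m n := by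
    simp only [Gm, ← Multiset.singleton_add, Bool.cond_true, Bool.cond_false]
    abel
  rw [h, Multiset.erase_cons_head]

lemma erase_c4 (a : Bool) (m n : ℕ) :
    (Gm a true m n).erase (Comp.chain 4) = Gm a false m n := by
  have h : Gm a true m n = Comp.chain 4 ::ₘ Gm a false m n := by
    simp only [Gm, ← Multiset.singleton_add, Bool.cond_true, Bool.cond_false]
    abel
  rw [h, Multiset.erase_cons_head]

lemma erase_l4 (a b : Bool) (m n : ℕ) :
    (Gm a b (m + 1) n).erase (Comp.loop 4) = Gm a b m n := by
  have h : Gm a b (m + 1) n = Comp.loop 4 ::ₘ Gm a b m n := by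
    simp only [Gm, Multiset.replicate_succ, ← Multiset.singleton_add]
    abel
  rw [h, Multiset.erase_cons_head]

lemma erase_l6 (a b : Bool) (m n : ℕ) :
    (Gm a b m (n + 1)).erase (Comp.loop 6) = Gm a b m n := by
  have h : Gm a b m (n + 1) = Comp.loop 6 ::ₘ Gm a b m n := by
    simp only [Gm, Multiset.replicate_succ, ← Multiset.singleton_add]
    abel
  rw [h, Multiset.erase_cons_head]

lemma num1 (b : Bool) (m n : ℕ) : f true b m n ≤ 1 + |f false b m n - 2| := by
  cases b <;> simp only [f] <;> split_ifs <;>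
    first | decide | (exfalso; omega) | (exfalso; simp_all)

lemma num2 (a : Bool) (m n : ℕ) : f a true m n ≤ 2 + |f a false m n - 2| := by
  cases a <;> simp only [f] <;> split_ifs <;>
    first | decide | (exfalso; omega) | (exfalso; simp_all)

lemma num3 (a b : Bool) (m n : ℕ) : f a b (m + 1) n ≤ |f a b m n - 4| := by
  cases a <;> cases b <;> simp only [f] <;> split_ifs <;>
    first | decide | (exfalso; omega) | (exfalso; simp_all)

lemma num4 (a b : Bool) (m n : ℕ) : f a b m (n + 1) ≤ 2 + |f a b m n - 4| := by
  cases a <;> cases b <;> simp only [f] <;> split_ifs <;>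
    first | decide | (exfalso; omega) | (exfalso; simp_all)

lemma w1t (m n : ℕ) (h : ¬(m % 2 = 1 ∧ n % 2 = 0)) :
    1 + |f false true m n - 2| ≤ f true true m n := by
  simp only [f] <;> split_ifs <;>
    first | decide | (exfalso; omega) | (exfalso; simp_all)

lemma w1f (m n : ℕ) (h : ¬(m % 2 = 1 ∧ n % 2 = 0)) (h2 : ¬(m = 0 ∧ n = 1)) :
    1 + |f false false m n - 2| ≤ f true false m n := by
  simp only [f] <;> split_ifs <;>
    first | decide | (exfalso; omega) | (exfalso; simp_all)

lemma w2 (a b : Bool) (m n : ℕ) (h : m % 2 = 0) (h2 : n % 2 = 0) :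
    |f a b m n - 4| ≤ f a b (m + 1) n := by
  cases a <;> cases b <;> simp only [f] <;> split_ifs <;>
    first | decide | (exfalso; omega) | (exfalso; simp_all)

lemma w3 (m n : ℕ) (h : ¬(m % 2 = 1 ∧ n % 2 = 0)) (h2 : ¬(m = 0 ∧ n = 1)) :
    2 + |f false false m n - 2| ≤ f false true m n := by
  simp only [f] <;> split_ifs <;>
    first | decide | (exfalso; omega) | (exfalso; simp_all)

lemma w4 (n : ℕ) : 2 + |f false false 0 n - 4| ≤ f false false 0 (n + 1) := by
  simp only [f] <;> split_ifs <;>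
    first | decide | (exfalso; omega) | (exfalso; simp_all)

lemma w5 (m n : ℕ) : |f false false m n - 4| ≤ f false false (m + 1) n := by
  simp only [f] <;> split_ifs <;>
    first | decide | (exfalso; omega) | (exfalso; simp_all)

lemma w6 : 2 + |f false true 0 0 - 4| ≤ f false true 0 1 := by decide

lemma w7 : 2 + |f true false 0 0 - 4| ≤ f true false 0 1 := by decide

lemma key : ∀ (N : ℕ) (a b : Bool) (m n : ℕ), Multiset.card (Gm a b m n) ≤ N →
    v (Gm a b m n) = f a b m n := by
  intro N
  induction N with
  | zero =>
    intro a b m n h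
    rw [card_Gm] at h
    cases a <;> cases b <;> simp only [Bool.cond_true, Bool.cond_false] at h
    · obtain rfl : m = 0 := by omega
      obtain rfl : n = 0 := by omega
      have h0 : Gm false false 0 0 = 0 := by simp [Gm]
      rw [h0]
      rfl
    · omega
    · omega
    · omega
  | succ N IH =>
    intro a b m n h
    by_cases hG : Gm a b m n = 0
    · have hc : (cond a 1 0) + (cond b 1 0) + m + n = 0 := by
        rw [← card_Gm, hG]; rfl
      cases a <;> cases b <;> simp only [Bool.cond_true, Bool.cond_false] at hc
      · obtain rfl : m = 0 := by omega
        obtain rfl : n = 0 := by omega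
        rw [hG]; rfl
      · omega
      · omega
      · omega
    · rw [v_eq _ hG]
      have hbdd : BddBelow {x : ℤ | ∃ p ∈ Gm a b m n, x = optv p (v ((Gm a b m n).erase p))} := by
        refine ⟨0, fun x hx => ?_⟩
        obtain ⟨p, hp, rfl⟩ := hx
        rcases mem_Gm.mp hp with ⟨ha, rfl⟩ | ⟨hb, rfl⟩ | ⟨hm, rfl⟩ | ⟨hn, rfl⟩
        · simp only [optv]
          have := abs_nonneg (v ((Gm a b m n).erase (Comp.chain 3)) - 2); linarith
        · simp only [optv]
          have := abs_nonneg (v ((Gm a b m n).erase (Comp.chain 4)) - 2); linarith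
        · simp only [optv]
          have := abs_nonneg (v ((Gm a b m n).erase (Comp.loop 4)) - 4); linarith
        · simp only [optv]
          have := abs_nonneg (v ((Gm a b m n).erase (Comp.loop 6)) - 4); linarith
      obtain ⟨x, hxS, hxf⟩ :
          ∃ x ∈ {x : ℤ | ∃ p ∈ Gm a b m n, x = optv p (v ((Gm a b m n).erase p))},
            x ≤ f a b m n := by
        cases a with
        | true =>
          by_cases hmn : m % 2 = 1 ∧ n % 2 = 0
          · obtain ⟨k, rfl⟩ : ∃ k, m = k + 1 := ⟨m - 1, by omega⟩
            have hmem : Comp.loop 4 ∈ Gm true b (k + 1) n :=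
              mem_Gm.mpr (Or.inr (Or.inr (Or.inl ⟨by omega, rfl⟩)))
            refine ⟨_, ⟨Comp.loop 4, hmem, rfl⟩, ?_⟩
            rw [erase_l4, IH true b k n (by rw [← erase_l4 true b k n]; exact card_le_of_erase hmem h)]
            simp only [optv]
            have := w2 true b k n (by omega) (by omega)
            linarith
          · cases b with
            | true =>
              have hmem : Comp.chain 3 ∈ Gm true true m n := mem_Gm.mpr (Or.inl ⟨rfl, rfl⟩)
              refine ⟨_, ⟨Comp.chain 3, hmem, rfl⟩, ?_⟩
              rw [erase_c3, IH false true m n (by rw [← erase_c3 true m n]; exact card_le_of_erase hmem h)]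
              simp only [optv]
              have := w1t m n hmn
              linarith
            | false =>
              by_cases h01 : m = 0 ∧ n = 1
              · obtain ⟨rfl, rfl⟩ := h01
                have hmem : Comp.loop 6 ∈ Gm true false 0 1 :=
                  mem_Gm.mpr (Or.inr (Or.inr (Or.inr ⟨by omega, rfl⟩)))
                refine ⟨_, ⟨Comp.loop 6, hmem, rfl⟩, ?_⟩
                have he : (Gm true false 0 1).erase (Comp.loop 6) = Gm true false 0 0 :=
                  erase_l6 true false 0 0
                rw [he, IH true false 0 0 (by rw [← he]; exact card_le_of_erase hmem h)]
                simp only [optv]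
                have := w7
                linarith
              · have hmem : Comp.chain 3 ∈ Gm true false m n := mem_Gm.mpr (Or.inl ⟨rfl, rfl⟩)
                refine ⟨_, ⟨Comp.chain 3, hmem, rfl⟩, ?_⟩
                rw [erase_c3, IH false false m n (by rw [← erase_c3 false m n]; exact card_le_of_erase hmem h)]
                simp only [optv]
                have := w1f m n hmn h01
                linarith
        | false =>
          cases b with
          | true =>
            by_cases hmn : m % 2 = 1 ∧ n % 2 = 0
            · obtain ⟨k, rfl⟩ : ∃ k, m = k + 1 := ⟨m - 1, by omega⟩
              have hmem : Comp.loop 4 ∈ Gm false true (k + 1) n :=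
                mem_Gm.mpr (Or.inr (Or.inr (Or.inl ⟨by omega, rfl⟩)))
              refine ⟨_, ⟨Comp.loop 4, hmem, rfl⟩, ?_⟩
              rw [erase_l4, IH false true k n (by rw [← erase_l4 false true k n]; exact card_le_of_erase hmem h)]
              simp only [optv]
              have := w2 false true k n (by omega) (by omega)
              linarith
            · by_cases h01 : m = 0 ∧ n = 1
              · obtain ⟨rfl, rfl⟩ := h01
                have hmem : Comp.loop 6 ∈ Gm false true 0 1 :=
                  mem_Gm.mpr (Or.inr (Or.inr (Or.inr ⟨by omega, rfl⟩)))
                refine ⟨_, ⟨Comp.loop 6, hmem, rfl⟩, ?_⟩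
                have he : (Gm false true 0 1).erase (Comp.loop 6) = Gm false true 0 0 :=
                  erase_l6 false true 0 0
                rw [he, IH false true 0 0 (by rw [← he]; exact card_le_of_erase hmem h)]
                simp only [optv]
                have := w6
                linarith
              · have hmem : Comp.chain 4 ∈ Gm false true m n :=
                  mem_Gm.mpr (Or.inr (Or.inl ⟨rfl, rfl⟩))
                refine ⟨_, ⟨Comp.chain 4, hmem, rfl⟩, ?_⟩
                rw [erase_c4, IH false false m n (by rw [← erase_c4 false m n]; exact card_le_of_erase hmem h)]
                simp only [optv]
                have := w3 m n hmn h01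
                linarith
          | false =>
            rcases Nat.eq_zero_or_pos m with rfl | hm
            · have hn : n ≠ 0 := by
                intro h0; subst h0; exact hG (by simp [Gm])
              obtain ⟨k, rfl⟩ : ∃ k, n = k + 1 := ⟨n - 1, by omega⟩
              have hmem : Comp.loop 6 ∈ Gm false false 0 (k + 1) :=
                mem_Gm.mpr (Or.inr (Or.inr (Or.inr ⟨by omega, rfl⟩)))
              refine ⟨_, ⟨Comp.loop 6, hmem, rfl⟩, ?_⟩
              rw [erase_l6, IH false false 0 k (by rw [← erase_l6 false false 0 k]; exact card_le_of_erase hmem h)]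
              simp only [optv]
              have := w4 k
              linarith
            · obtain ⟨k, rfl⟩ : ∃ k, m = k + 1 := ⟨m - 1, by omega⟩
              have hmem : Comp.loop 4 ∈ Gm false false (k + 1) n :=
                mem_Gm.mpr (Or.inr (Or.inr (Or.inl ⟨by omega, rfl⟩)))
              refine ⟨_, ⟨Comp.loop 4, hmem, rfl⟩, ?_⟩
              rw [erase_l4, IH false false k n (by rw [← erase_l4 false false k n]; exact card_le_of_erase hmem h)]
              simp only [optv]
              have := w5 k n
              linarith
      refine le_antisymm (le_trans (csInf_le hbdd hxS) hxf) (le_csInf ⟨x, hxS⟩ ?_)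
      rintro y ⟨p, hp, rfl⟩
      rcases mem_Gm.mp hp with ⟨ha, rfl⟩ | ⟨hb, rfl⟩ | ⟨hm, rfl⟩ | ⟨hn, rfl⟩
      · subst ha
        have hmem : Comp.chain 3 ∈ Gm true b m n := mem_Gm.mpr (Or.inl ⟨rfl, rfl⟩)
        rw [erase_c3, IH false b m n (by rw [← erase_c3 b m n]; exact card_le_of_erase hmem h)]
        simp only [optv]
        have := num1 b m n
        linarith
      · subst hb
        have hmem : Comp.chain 4 ∈ Gm a true m n := mem_Gm.mpr (Or.inr (Or.inl ⟨rfl, rfl⟩))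
        rw [erase_c4, IH a false m n (by rw [← erase_c4 a m n]; exact card_le_of_erase hmem h)]
        simp only [optv]
        have := num2 a m n
        linarith
      · obtain ⟨k, rfl⟩ : ∃ k, m = k + 1 := ⟨m - 1, by omega⟩
        have hmem : Comp.loop 4 ∈ Gm a b (k + 1) n :=
          mem_Gm.mpr (Or.inr (Or.inr (Or.inl ⟨by omega, rfl⟩)))
        rw [erase_l4, IH a b k n (by rw [← erase_l4 a b k n]; exact card_le_of_erase hmem h)]
        simp only [optv]
        have := num3 a b k n
        linarith
      · obtain ⟨k, rfl⟩ : ∃ k, n = k + 1 := ⟨n - 1, by omega⟩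
        have hmem : Comp.loop 6 ∈ Gm a b m (k + 1) :=
          mem_Gm.mpr (Or.inr (Or.inr (Or.inr ⟨by omega, rfl⟩)))
        rw [erase_l6, IH a b m k (by rw [← erase_l6 a b m k]; exact card_le_of_erase hmem h)]
        simp only [optv]
        have := num4 a b m k
        linarith

end SL

theorem stmt18 :
    v (Comp.chain 3 ::ₘ Comp.chain 4 ::ₘ
      (Multiset.replicate 100 (Comp.loop 4) + Multiset.replicate 100 (Comp.loop 6))) = 3 := by
  have hg : SL.Gm true true 100 100 =
      Comp.chain 3 ::ₘ Comp.chain 4 ::ₘ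
      (Multiset.replicate 100 (Comp.loop 4) + Multiset.replicate 100 (Comp.loop 6)) := by
    simp only [SL.Gm, Bool.cond_true, ← Multiset.singleton_add]
    abel
  rw [← hg, SL.key (Multiset.card (SL.Gm true true 100 100)) true true 100 100 le_rfl]
  decide
end
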